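/- arXiv:1010.1648 — 2 statements merged into one kernel-verified Lean document; each statement's English description precedes it below -/
import Mathlib

section
/- Let u > 0 and define G(η) = (1-η)·e^{uη}/√η for η ∈ (0,1]. Then G has a critical point in (0,1) if and only if u ≥ (3+2√2)/2. -/
open Real Set

/-!
Writing `G η = (1 - η) e^{uη} / √η`, one finds
`G' η = e^{uη} (2uη(1 - η) - (1 + η)) / (2η√η)`, so the critical points in `(0, 1)` are the
solutions of `2uη(1 - η) = 1 + η`. Since `(1 + √2)² = 3 + 2√2`,
`1 + η - (3 + 2√2) η (1 - η) = ((1 + √2) η - 1)² ≥ 0`, which forces `u ≥ (3 + 2√2)/2`.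
Conversely, for such `u` the quadratic `2uη² - (2u - 1)η + 1` has nonnegative discriminant,
and each of its real roots lies in `(0, 1)`.
-/

lemma hasDerivAt_one_sub_mul_exp_div_sqrt (u : ℝ) {η : ℝ} (hη : 0 < η) :
    HasDerivAt (fun x : ℝ => (1 - x) * exp (u * x) / √x)
      (exp (u * η) * (2 * u * η * (1 - η) - (1 + η)) / (2 * η * √η)) η := by
  have hsqrt : √η ≠ 0 := (sqrt_pos.mpr hη).ne'
  have hexp : HasDerivAt (fun x : ℝ => exp (u * x)) (exp (u * η) * u) η :=
    ((hasDerivAt_id η).const_mul u).exp.congr_deriv (by simp)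
  refine ((((hasDerivAt_id η).const_sub 1).fun_mul hexp).fun_div (hasDerivAt_sqrt hη.ne')
    hsqrt).congr_deriv ?_
  simp only [id]
  field_simp
  rw [sq_sqrt hη.le]
  ring

lemma deriv_one_sub_mul_exp_div_sqrt_eq_zero_iff (u : ℝ) {η : ℝ} (hη : 0 < η) :
    deriv (fun x : ℝ => (1 - x) * exp (u * x) / √x) η = 0 ↔ 2 * u * η * (1 - η) = 1 + η := by
  have hden : 2 * η * √η ≠ 0 := by positivity
  rw [(hasDerivAt_one_sub_mul_exp_div_sqrt u hη).deriv, div_eq_zero_iff, or_iff_left hden,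
    mul_eq_zero, or_iff_right (exp_pos _).ne', sub_eq_zero]

lemma le_of_two_mul_mul_one_sub_eq {u η : ℝ} (hη : η ∈ Ioo 0 1)
    (h : 2 * u * η * (1 - η) = 1 + η) : (3 + 2 * √2) / 2 ≤ u := by
  have hpos : 0 < η * (1 - η) := mul_pos hη.1 (sub_pos.mpr hη.2)
  have key : 1 + η - (3 + 2 * √2) * (η * (1 - η)) = ((1 + √2) * η - 1) ^ 2 := by
    linear_combination (-η ^ 2) * sq_sqrt (zero_le_two : (0 : ℝ) ≤ 2)
  nlinarith [sq_nonneg ((1 + √2) * η - 1)]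

lemma exists_mem_Ioo_two_mul_mul_one_sub_eq {u : ℝ} (hu : (3 + 2 * √2) / 2 ≤ u) :
    ∃ η ∈ Ioo (0 : ℝ) 1, 2 * u * η * (1 - η) = 1 + η := by
  have hsqrt2 : √2 ^ 2 = 2 := sq_sqrt zero_le_two
  have hu1 : 1 < u := by nlinarith [sqrt_nonneg 2]
  have hdisc : 0 ≤ discrim (2 * u) (-(2 * u - 1)) 1 := by
    rw [discrim]; nlinarith [sqrt_nonneg 2]
  obtain ⟨η, hroot⟩ := exists_quadratic_eq_zero (by positivity : 2 * u ≠ 0)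
    ⟨_, (mul_self_sqrt hdisc).symm⟩
  refine ⟨η, ⟨?_, ?_⟩, by linarith⟩
  · nlinarith [sq_nonneg η]
  · nlinarith [mul_self_nonneg (η - 1)]

theorem stmt_0_general (u : ℝ) :
    (∃ η ∈ Set.Ioo (0:ℝ) 1,
        deriv (fun η : ℝ => (1 - η) * Real.exp (u * η) / Real.sqrt η) η = 0) ↔
      (3 + 2 * Real.sqrt 2) / 2 ≤ u := by
  constructor
  · rintro ⟨η, hη, hcrit⟩
    exact le_of_two_mul_mul_one_sub_eq hη
      ((deriv_one_sub_mul_exp_div_sqrt_eq_zero_iff u hη.1).mp hcrit)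
  · intro hu
    obtain ⟨η, hη, hcrit⟩ := exists_mem_Ioo_two_mul_mul_one_sub_eq hu
    exact ⟨η, hη, (deriv_one_sub_mul_exp_div_sqrt_eq_zero_iff u hη.1).mpr hcrit⟩

theorem stmt_0 (u : ℝ) (hu : 0 < u) :
    (∃ η ∈ Set.Ioo (0:ℝ) 1,
        deriv (fun η : ℝ => (1 - η) * Real.exp (u * η) / Real.sqrt η) η = 0) ↔
      (3 + 2 * Real.sqrt 2) / 2 ≤ u :=
  stmt_0_general u
end

section
/- Let u > (3+2√2)/2 and G(η) = (1-η)e^{uη}/√η on (0,1). For every β with 0 < β < G(η_m) or β > G(η_M), the equation G(η) = β has exactly one solution in (0,1). -/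
/-!
The derivative of `G` is `exp (u η) / (η √η)` times the quadratic
`-u η² + (u - 1/2) η - 1/2`, whose roots are `ηm < ηM`, both in `(0, 1)` once the
discriminant `u² - 3u + 1/4` is positive, i.e. once `u > (3 + 2√2)/2`. So `G` decreases
from `+∞` to `G ηm`, increases to `G ηM` and decreases to `G 1 = 0`. A level
`β ∈ (0, G ηm)` is not attained on `(0, ηM]`, where `G ≥ G ηm`, and is attained exactly
once on the last branch; a level `β > G ηM` is not attained on `[ηm, 1)`, where
`G ≤ G ηM`, and is attained exactly once on the first branch.
-/

open Real Set Filter Topology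

section ShapeOfGraph

variable {f : ℝ → ℝ} {a b : ℝ}

theorem le_of_strictAntiOn_Ioc_of_strictMonoOn_Icc (ha : 0 < a)
    (h₁ : StrictAntiOn f (Ioc 0 a)) (h₂ : StrictMonoOn f (Icc a b))
    {x : ℝ} (hx : x ∈ Ioc 0 b) :
    f a ≤ f x := by
  rcases le_total x a with hxa | hax
  · exact h₁.antitoneOn ⟨hx.1, hxa⟩ (right_mem_Ioc.2 ha) hxa
  · exact h₂.monotoneOn (left_mem_Icc.2 (hax.trans hx.2)) ⟨hax, hx.2⟩ hax

theorem le_of_strictMonoOn_Icc_of_strictAntiOn_Icc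
    (h₂ : StrictMonoOn f (Icc a b)) (h₃ : StrictAntiOn f (Icc b 1))
    {x : ℝ} (hx : x ∈ Icc a 1) :
    f x ≤ f b := by
  rcases le_total x b with hxb | hbx
  · exact h₂.monotoneOn ⟨hx.1, hxb⟩ (right_mem_Icc.2 (hx.1.trans hxb)) hxb
  · exact h₃.antitoneOn (left_mem_Icc.2 (hbx.trans hx.2)) ⟨hbx, hx.2⟩ hbx

theorem existsUnique_eq_of_lt_localMin (ha : 0 < a) (hab : a < b) (hb1 : b < 1)
    (h₁ : StrictAntiOn f (Ioc 0 a)) (h₂ : StrictMonoOn f (Icc a b))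
    (h₃ : StrictAntiOn f (Icc b 1))
    (hcont : ContinuousOn f (Icc b 1)) (hf1 : f 1 = 0) {β : ℝ} (hβ0 : 0 < β) (hβ : β < f a) :
    ∃! η, η ∈ Ioo 0 1 ∧ f η = β := by
  have hfab : f a < f b := h₂ (left_mem_Icc.2 hab.le) (right_mem_Icc.2 hab.le) hab
  obtain ⟨c, hc, hfc⟩ : ∃ c ∈ Icc b 1, f c = β :=
    intermediate_value_Icc' hb1.le hcont ⟨hf1 ▸ hβ0.le, (hβ.trans hfab).le⟩
  have hc1 : c ≠ 1 := by rintro rfl; linarith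
  refine ⟨c, ⟨⟨ha.trans (hab.trans_le hc.1), hc.2.lt_of_ne hc1⟩, hfc⟩, ?_⟩
  rintro y ⟨hy, hfy⟩
  have hby : b < y := by
    by_contra! hyb
    linarith [le_of_strictAntiOn_Ioc_of_strictMonoOn_Icc ha h₁ h₂ ⟨hy.1, hyb⟩]
  exact h₃.injOn ⟨hby.le, hy.2.le⟩ hc (hfy.trans hfc.symm)

theorem existsUnique_eq_of_localMax_lt (ha : 0 < a) (hab : a < b) (hb1 : b < 1)
    (h₁ : StrictAntiOn f (Ioc 0 a)) (h₂ : StrictMonoOn f (Icc a b))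
    (h₃ : StrictAntiOn f (Icc b 1))
    (hcont : ContinuousOn f (Ioc 0 a)) (hf0 : Tendsto f (𝓝[>] 0) atTop)
    {β : ℝ} (hβ : f b < β) :
    ∃! η, η ∈ Ioo 0 1 ∧ f η = β := by
  have hfab : f a < f b := h₂ (left_mem_Icc.2 hab.le) (right_mem_Icc.2 hab.le) hab
  obtain ⟨ε, hβε, hε⟩ := ((hf0.eventually_gt_atTop β).and (Ioo_mem_nhdsGT ha)).exists
  obtain ⟨c, hc, hfc⟩ : ∃ c ∈ Icc ε a, f c = β :=
    intermediate_value_Icc' hε.2.le (hcont.mono (Icc_subset_Ioc hε.1 le_rfl))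
      ⟨(hfab.trans hβ).le, hβε.le⟩
  refine ⟨c, ⟨⟨hε.1.trans_le hc.1, hc.2.trans_lt (hab.trans hb1)⟩, hfc⟩, ?_⟩
  rintro y ⟨hy, hfy⟩
  have hya : y < a := by
    by_contra! hay
    linarith [le_of_strictMonoOn_Icc_of_strictAntiOn_Icc h₂ h₃ ⟨hay, hy.2.le⟩]
  exact h₁.injOn ⟨hy.1, hya.le⟩ ⟨hε.1.trans_le hc.1, hc.2⟩ (hfy.trans hfc.symm)

end ShapeOfGraph

noncomputable def profile (u η : ℝ) : ℝ := (1 - η) * exp (u * η) / √η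

theorem profile_one (u : ℝ) : profile u 1 = 0 := by simp [profile]

theorem continuousOn_profile (u : ℝ) : ContinuousOn (profile u) (Ioi 0) :=
  fun _ hx => by unfold profile; fun_prop (disch := exact (sqrt_pos.2 hx).ne')

theorem tendsto_profile_nhdsGT_zero (u : ℝ) : Tendsto (profile u) (𝓝[>] 0) atTop := by
  have hnum : Tendsto (fun η => (1 - η) * exp (u * η)) (𝓝[>] 0) (𝓝 1) := by
    have : Continuous (fun η => (1 - η) * exp (u * η)) := by fun_prop
    simpa using (this.tendsto 0).mono_left nhdsWithin_le_nhds
  have hsqrt : Tendsto (fun η => √η) (𝓝[>] 0) (𝓝[>] 0) :=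
    tendsto_nhdsWithin_of_tendsto_nhds_of_eventually_within _
      (by simpa using continuous_sqrt.continuousWithinAt.tendsto (x := 0) (s := Ioi 0))
      (eventually_nhdsWithin_of_forall fun _ hx => sqrt_pos.2 hx)
  exact (hnum.pos_mul_atTop one_pos (tendsto_inv_nhdsGT_zero.comp hsqrt)).congr
    fun η => (div_eq_mul_inv _ _).symm

theorem hasDerivAt_profile (u : ℝ) {x : ℝ} (hx : 0 < x) :
    HasDerivAt (profile u)
      (exp (u * x) / (x * √x) * (-u * x ^ 2 + (u - 1 / 2) * x - 1 / 2)) x := by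
  have hs : 0 < √x := sqrt_pos.2 hx
  have h := ((((hasDerivAt_id x).const_sub 1).mul
    (((hasDerivAt_id x).const_mul u).exp)).div (hasDerivAt_sqrt hx.ne') hs.ne')
  simp only [Pi.mul_apply, id] at h
  refine h.congr_deriv ?_
  have hxx : √x ^ 2 = x := sq_sqrt hx.le
  field_simp
  linear_combination (1 - x) * hxx

section Monotonicity

variable {u ηm ηM : ℝ}

theorem strictAntiOn_profile_Ioc (hu : 0 < u)
    (hroots : ∀ x, -u * x ^ 2 + (u - 1 / 2) * x - 1 / 2 = -u * ((x - ηm) * (x - ηM)))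
    (hmM : ηm ≤ ηM) : StrictAntiOn (profile u) (Ioc 0 ηm) := by
  refine strictAntiOn_of_deriv_neg (convex_Ioc 0 ηm)
    ((continuousOn_profile u).mono Ioc_subset_Ioi_self) fun x hx => ?_
  obtain ⟨hx0, hxm⟩ : x ∈ Ioo 0 ηm := by rwa [interior_Ioc] at hx
  have hprod : 0 < (x - ηm) * (x - ηM) :=
    mul_pos_of_neg_of_neg (by linarith) (by linarith)
  rw [(hasDerivAt_profile u hx0).deriv, hroots]
  exact mul_neg_of_pos_of_neg (by positivity) (by nlinarith)

theorem strictMonoOn_profile_Icc (hu : 0 < u)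
    (hroots : ∀ x, -u * x ^ 2 + (u - 1 / 2) * x - 1 / 2 = -u * ((x - ηm) * (x - ηM)))
    (hm : 0 < ηm) : StrictMonoOn (profile u) (Icc ηm ηM) := by
  refine strictMonoOn_of_deriv_pos (convex_Icc ηm ηM)
    ((continuousOn_profile u).mono fun x hx => hm.trans_le hx.1) fun x hx => ?_
  obtain ⟨hmx, hxM⟩ : x ∈ Ioo ηm ηM := by rwa [interior_Icc] at hx
  have hx0 : 0 < x := hm.trans hmx
  have hprod : (x - ηm) * (x - ηM) < 0 :=
    mul_neg_of_pos_of_neg (by linarith) (by linarith)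
  rw [(hasDerivAt_profile u hx0).deriv, hroots]
  exact mul_pos (by positivity) (by nlinarith)

theorem strictAntiOn_profile_Ici (hu : 0 < u)
    (hroots : ∀ x, -u * x ^ 2 + (u - 1 / 2) * x - 1 / 2 = -u * ((x - ηm) * (x - ηM)))
    (hM : 0 < ηM) (hmM : ηm ≤ ηM) : StrictAntiOn (profile u) (Ici ηM) := by
  refine strictAntiOn_of_deriv_neg (convex_Ici ηM)
    ((continuousOn_profile u).mono fun x hx => hM.trans_le hx) fun x hx => ?_
  have hMx : ηM < x := by rwa [interior_Ici] at hx
  have hx0 : 0 < x := hM.trans hMx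
  have hprod : 0 < (x - ηm) * (x - ηM) := mul_pos (by linarith) (by linarith)
  rw [(hasDerivAt_profile u hx0).deriv, hroots]
  exact mul_neg_of_pos_of_neg (by positivity) (by nlinarith)

end Monotonicity

theorem sq_sub_three_mul_add_pos {u : ℝ} (hu : (3 + 2 * √2) / 2 < u) :
    0 < u ^ 2 - 3 * u + 1 / 4 := by
  nlinarith [sq_sqrt (zero_le_two : (0 : ℝ) ≤ 2), sqrt_nonneg 2]

theorem criticalPoints_mem {u Δ ηm ηM : ℝ} (hu : 1 / 2 < u) (hΔ : 0 < Δ)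
    (hΔsq : Δ ^ 2 = u ^ 2 - 3 * u + 1 / 4)
    (hm : ηm = (u - 1 / 2 - Δ) / (2 * u)) (hM : ηM = (u - 1 / 2 + Δ) / (2 * u)) :
    0 < ηm ∧ ηm < ηM ∧ ηM < 1 := by
  have h2u : 0 < 2 * u := by linarith
  have hΔu : Δ < u - 1 / 2 := by nlinarith
  subst hm hM
  refine ⟨div_pos (by linarith) h2u, div_lt_div_of_pos_right (by linarith) h2u, ?_⟩
  rw [div_lt_one h2u]
  linarith

theorem criticalPoints_roots {u Δ ηm ηM : ℝ} (hu : u ≠ 0)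
    (hΔsq : Δ ^ 2 = u ^ 2 - 3 * u + 1 / 4)
    (hm : ηm = (u - 1 / 2 - Δ) / (2 * u)) (hM : ηM = (u - 1 / 2 + Δ) / (2 * u)) (x : ℝ) :
    -u * x ^ 2 + (u - 1 / 2) * x - 1 / 2 = -u * ((x - ηm) * (x - ηM)) := by
  subst hm hM
  field_simp
  linear_combination (-4 : ℝ) * hΔsq

theorem stmt_14 (u : ℝ) (hu : (3 + 2 * Real.sqrt 2) / 2 < u)
    (Δ ηm ηM : ℝ)
    (hΔ : Δ = Real.sqrt (u ^ 2 - 3 * u + 1 / 4))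
    (hm : ηm = (u - 1 / 2 - Δ) / (2 * u))
    (hM : ηM = (u - 1 / 2 + Δ) / (2 * u))
    (G : ℝ → ℝ) (hG : G = fun η : ℝ => (1 - η) * Real.exp (u * η) / Real.sqrt η)
    (β : ℝ) (hβ : (0 < β ∧ β < G ηm) ∨ G ηM < β) :
    ∃! η : ℝ, η ∈ Set.Ioo (0:ℝ) 1 ∧ G η = β := by
  obtain rfl : G = profile u := hG
  have hu0 : 0 < u := by linarith [sqrt_nonneg 2]
  have hdisc := sq_sub_three_mul_add_pos hu
  have hΔsq : Δ ^ 2 = u ^ 2 - 3 * u + 1 / 4 := hΔ ▸ sq_sqrt hdisc.le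
  obtain ⟨hm0, hmM, hM1⟩ :=
    criticalPoints_mem (by linarith [sqrt_nonneg 2]) (hΔ ▸ sqrt_pos.2 hdisc) hΔsq hm hM
  have hroots := criticalPoints_roots hu0.ne' hΔsq hm hM
  have h₁ := strictAntiOn_profile_Ioc hu0 hroots hmM.le
  have h₂ := strictMonoOn_profile_Icc hu0 hroots hm0
  have h₃ : StrictAntiOn (profile u) (Icc ηM 1) :=
    (strictAntiOn_profile_Ici hu0 hroots (hm0.trans hmM) hmM.le).mono Icc_subset_Ici_self
  rcases hβ with ⟨hβ0, hβm⟩ | hβM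
  · exact existsUnique_eq_of_lt_localMin hm0 hmM hM1 h₁ h₂ h₃
      ((continuousOn_profile u).mono fun x hx => hm0.trans (hmM.trans_le hx.1))
      (profile_one u) hβ0 hβm
  · exact existsUnique_eq_of_localMax_lt hm0 hmM hM1 h₁ h₂ h₃
      ((continuousOn_profile u).mono Ioc_subset_Ioi_self) (tendsto_profile_nhdsGT_zero u) hβM
end
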